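/- arXiv:1007.3868 — 3 statements merged into one kernel-verified Lean document; each statement's English description precedes it below -/
import Mathlib

section
/- Let I be a directly finite small category (i.e. for morphisms u : x → y and v : y → x, v ∘ u = id_x implies u ∘ v = id_y) and C : I → Cat a functor such that C(i) is directly finite for every object i of I. Then the Grothendieck construction (homotopy colimit) ∫ C is directly finite, i.e., for any morphisms (u,f) : (i,c) → (j,d) and (v,g) : (j,d) → (i,c) with (v,g) ∘ (u,f) = id, we also have (u,f) ∘ (v,g) = id. -/
open CategoryTheory

universe v u v₂ u₂

/-- A category `Γ` is *directly finite* if for any objects `x`, `y` and morphisms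
`u : x ⟶ y`, `v : y ⟶ x`, the equation `v ∘ u = id x` implies `u ∘ v = id y`. -/
def DirectlyFinite (Γ : Type u) [Category.{v} Γ] : Prop :=
  ∀ ⦃x y : Γ⦄ (u : x ⟶ y) (v : y ⟶ x), u ≫ v = 𝟙 x → v ≫ u = 𝟙 y

/-- If `I` is a directly finite small category and `C : I ⥤ Cat` is a functor such that
`C(i)` is directly finite for every object `i`, then the Grothendieck construction
(homotopy colimit) `∫ C` is directly finite. -/
theorem directlyFinite_grothendieck {I : Type u} [Category.{v} I]
    (C : I ⥤ Cat.{v₂, u₂}) (hI : DirectlyFinite I)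
    (hC : ∀ i : I, DirectlyFinite (C.obj i)) :
    DirectlyFinite (Grothendieck C) := by
  intro x y u v huv
  have hb : u.base ≫ v.base = 𝟙 x.base := congrArg Grothendieck.Hom.base huv
  have hb' : v.base ≫ u.base = 𝟙 y.base := hI u.base v.base hb
  have hGF : (C.map v.base).toFunctor ⋙ (C.map u.base).toFunctor = 𝟭 (C.obj y.base) := by
    rw [← Cat.Hom.comp_toFunctor, ← C.map_comp, hb', C.map_id]; rfl
  have hfib := Grothendieck.congr huv
  simp only [Grothendieck.comp_fiber, Grothendieck.id_fiber] at hfib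
  have key : u.fiber ≫ eqToHom ((Functor.congr_obj hGF y.fiber).symm)
      ≫ (C.map u.base).toFunctor.map v.fiber = 𝟙 ((C.map u.base).toFunctor.obj x.fiber) := by
    have h2 := congrArg (C.map u.base).toFunctor.map hfib
    simp only [Functor.map_comp, eqToHom_map] at h2
    erw [Functor.congr_hom hGF u.fiber] at h2
    simp only [Category.assoc, eqToHom_trans, Functor.id_map, eqToHom_trans_assoc] at h2
    rw [eqToHom_comp_iff] at h2
    rw [h2]
    simp
    exact (eqToHom_trans _ _).trans (eqToHom_refl _ _)
  have hfinal := hC y.base _ _ key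
  rw [Category.assoc, eqToHom_comp_iff] at hfinal
  apply Grothendieck.ext
  case w_base => exact hb'
  · simp only [Grothendieck.comp_fiber, Grothendieck.id_fiber, ← Category.assoc, eqToHom_trans]
    rw [Category.assoc, hfinal]
    simp
    exact eqToHom_trans _ _
end

section
/- Let I be an EI-category and C : I → Cat a functor such that C(i) is an EI-category for every object i, and such that for every automorphism u : i ≅ i in I, the map on isomorphism classes of objects of C(i) induced by C(u) is the identity. Then the Grothendieck construction ∫ C is an EI-category, i.e., every endomorphism in ∫ C is an isomorphism. -/
open CategoryTheory

universe v u v₂ u₂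

/-- An *EI-category* is a category in which every endomorphism is an isomorphism. -/
def IsEICategory (Γ : Type u) [Category.{v} Γ] : Prop :=
  ∀ (x : Γ) (f : x ⟶ x), IsIso f

theorem IsEICategory.isIso_of_iso {Γ : Type u} [Category.{v} Γ] (hΓ : IsEICategory Γ)
    {a b : Γ} (e : a ≅ b) (f : a ⟶ b) : IsIso f :=
  have : IsIso (f ≫ e.inv) := hΓ a _
  IsIso.of_isIso_comp_right f e.inv

theorem Grothendieck.isIso_of_isIso_base_of_isIso_fiber {I : Type u} [Category.{v} I]
    {C : I ⥤ Cat.{v₂, u₂}} {X Y : Grothendieck C} (f : X ⟶ Y)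
    [IsIso f.base] [IsIso f.fiber] : IsIso f :=
  (Grothendieck.isoMk (asIso f.base) (asIso f.fiber :)).isIso_hom

/-- If `I` is an EI-category and `C : I ⥤ Cat` is a functor such that every `C(i)` is an
EI-category, and such that for every automorphism `u : i ≅ i` in `I` the induced map on
isomorphism classes of objects of `C(i)` is the identity, then the Grothendieck
construction `∫ C` is an EI-category. -/
theorem isEICategory_grothendieck {I : Type u} [Category.{v} I]
    (C : I ⥤ Cat.{v₂, u₂}) (hI : IsEICategory I)
    (hC : ∀ i : I, IsEICategory (C.obj i))
    (hiso : ∀ (i : I) (u : i ⟶ i), IsIso u →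
      ∀ x : C.obj i, Nonempty ((C.map u).toFunctor.obj x ≅ x)) :
    IsEICategory (Grothendieck C) := by
  intro X f
  have : IsIso f.base := hI X.base f.base
  obtain ⟨e⟩ := hiso X.base f.base this X.fiber
  have : IsIso f.fiber := (hC X.base).isIso_of_iso e f.fiber
  exact Grothendieck.isIso_of_isIso_base_of_isIso_fiber f
end

section
/- Let a group G act on a skeletal scwol X in the sense of Bridson–Haefliger. Then the quotient category X/G (with objects the G-orbits of objects of X and morphisms the G-orbits of morphisms of X) is a skeletal scwol: any two isomorphic objects of X/G are equal. -/
open CategoryTheory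

universe v u

/-- A *scwol* (small category without loops) is a category in which every endomorphism
is the identity. -/
def IsScwol (X : Type u) [Category.{v} X] : Prop :=
  ∀ (x : X) (f : x ⟶ x), f = 𝟙 x

/-- An action of a group `G` on a (scwol) `X` in the sense of Bridson–Haefliger:
a homomorphism of `G` into the group of strictly invertible endofunctors of `X`
(encoded by `π_one` and `π_mul`), such that
(i) for every non-identity morphism `a : x ⟶ y` (i.e. `x ≠ y`, since `X` is a scwol)
    and every `g ∈ G`, `g • s(a) ≠ t(a)`, and
(ii) for every non-identity morphism `a` and `g ∈ G`, if `g • s(a) = s(a)` then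
    `g • a = a`. -/
structure ScwolAction (G : Type*) [Group G] (X : Type u) [Category.{v} X] where
  π : G → X ⥤ X
  π_one : π 1 = 𝟭 X
  π_mul : ∀ g h : G, π (g * h) = π h ⋙ π g
  cond_i : ∀ (g : G) ⦃x y : X⦄, (x ⟶ y) → x ≠ y → (π g).obj x ≠ y
  cond_ii : ∀ (g : G) ⦃x y : X⦄ (a : x ⟶ y), x ≠ y → (π g).obj x = x →
    (π g).obj y = y ∧ HEq ((π g).map a) a

variable {G : Type*} [Group G] {X : Type u} [Category.{v} X]

theorem ScwolAction.pi_comp (A : ScwolAction G X) (g h : G) (x : X) :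
    (A.π h).obj ((A.π g).obj x) = (A.π (h * g)).obj x := by
  rw [A.π_mul h g]; rfl

/-- The orbit setoid on the objects of `X`: two objects are related if some `g ∈ G`
carries one to the other.  The quotient is the set of objects of `X/G`. -/
def ScwolAction.objSetoid (A : ScwolAction G X) : Setoid X where
  r x y := ∃ g : G, (A.π g).obj x = y
  iseqv := by
    constructor
    · intro x; exact ⟨1, by rw [A.π_one]; rfl⟩
    · rintro x y ⟨g, rfl⟩
      exact ⟨g⁻¹, by rw [A.pi_comp, inv_mul_cancel, A.π_one]; rfl⟩
    · rintro x y z ⟨g, rfl⟩ ⟨h, rfl⟩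
      exact ⟨h * g, by rw [← A.pi_comp]⟩

/-- The type of all morphisms of `X`, bundled with their source and target. -/
abbrev Mor (X : Type u) [Category.{v} X] := Σ x y : X, x ⟶ y

/-- The action of `g ∈ G` on the morphisms of `X`. -/
def ScwolAction.actMor (A : ScwolAction G X) (g : G) (m : Mor X) : Mor X :=
  ⟨(A.π g).obj m.1, (A.π g).obj m.2.1, (A.π g).map m.2.2⟩

theorem ScwolAction.actMor_one (A : ScwolAction G X) (m : Mor X) :
    A.actMor 1 m = m := by
  obtain ⟨x, y, f⟩ := m
  show (⟨(A.π 1).obj x, (A.π 1).obj y, (A.π 1).map f⟩ : Mor X) = ⟨x, y, f⟩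
  rw [A.π_one]
  exact rfl

theorem ScwolAction.actMor_mul (A : ScwolAction G X) (g h : G) (m : Mor X) :
    A.actMor h (A.actMor g m) = A.actMor (h * g) m := by
  obtain ⟨x, y, f⟩ := m
  show (⟨(A.π h).obj ((A.π g).obj x), (A.π h).obj ((A.π g).obj y),
      (A.π h).map ((A.π g).map f)⟩ : Mor X) =
    ⟨(A.π (h * g)).obj x, (A.π (h * g)).obj y, (A.π (h * g)).map f⟩
  rw [A.π_mul h g]
  exact rfl

/-- The orbit setoid on the morphisms of `X`.  The quotient is the set of morphisms
of `X/G`. -/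
def ScwolAction.morSetoid (A : ScwolAction G X) : Setoid (Mor X) where
  r m m' := ∃ g : G, A.actMor g m = m'
  iseqv := by
    constructor
    · intro m; exact ⟨1, A.actMor_one m⟩
    · rintro m m' ⟨g, rfl⟩
      exact ⟨g⁻¹, by rw [A.actMor_mul, inv_mul_cancel, A.actMor_one]⟩
    · rintro m m' m'' ⟨g, rfl⟩ ⟨h, rfl⟩
      exact ⟨h * g, (A.actMor_mul g h m).symm⟩

/-- The source of a morphism of the quotient `X/G`, as an object of `X/G`. -/
def ScwolAction.morSrc (A : ScwolAction G X) :
    Quotient A.morSetoid → Quotient A.objSetoid :=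
  Quotient.lift (fun m : Mor X => Quotient.mk A.objSetoid m.1)
    (by rintro m m' ⟨g, rfl⟩; exact Quotient.sound ⟨g, rfl⟩)

/-- The target of a morphism of the quotient `X/G`, as an object of `X/G`. -/
def ScwolAction.morTgt (A : ScwolAction G X) :
    Quotient A.morSetoid → Quotient A.objSetoid :=
  Quotient.lift (fun m : Mor X => Quotient.mk A.objSetoid m.2.1)
    (by rintro m m' ⟨g, rfl⟩; exact Quotient.sound ⟨g, rfl⟩)

/-- `m₃` is the composite (in the quotient `X/G`) of `m₁` followed by `m₂`:
composition in `X/G` is induced by composition of a composable pair of lifts in `X`. -/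
def ScwolAction.QuotComp (A : ScwolAction G X) (m₁ m₂ m₃ : Quotient A.morSetoid) : Prop :=
  ∃ (x y z : X) (a : x ⟶ y) (b : y ⟶ z),
    m₁ = Quotient.mk A.morSetoid ⟨x, y, a⟩ ∧
    m₂ = Quotient.mk A.morSetoid ⟨y, z, b⟩ ∧
    m₃ = Quotient.mk A.morSetoid ⟨x, z, a ≫ b⟩

/-- **Quotients of skeletal scwols are skeletal.**  If a group `G` acts on a skeletal
scwol `X`, then any two isomorphic objects of the quotient `X/G` are equal: if there
are morphisms `f : σ̄ → τ̄` and `g : τ̄ → σ̄` in `X/G` whose two composites are the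
identities of `σ̄` and `τ̄`, then `σ̄ = τ̄`. -/
theorem quotient_scwol_skeletal (hX : IsScwol X)
    (hskel : ∀ x y : X, (x ≅ y) → x = y) (A : ScwolAction G X) (σ τ : X)
    (f g : Quotient A.morSetoid)
    (hfg : A.QuotComp f g (Quotient.mk A.morSetoid ⟨σ, σ, 𝟙 σ⟩))
    (hgf : A.QuotComp g f (Quotient.mk A.morSetoid ⟨τ, τ, 𝟙 τ⟩)) :
    Quotient.mk A.objSetoid σ = Quotient.mk A.objSetoid τ := by
  obtain ⟨x, y, z, a, b, hf, hg, h3⟩ := hfg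
  obtain ⟨p, q, r, a', b', hg', hf', h3'⟩ := hgf
  obtain ⟨g0, hg0⟩ := Quotient.exact h3
  obtain ⟨g1, hg1⟩ := Quotient.exact h3'
  obtain ⟨h2, hh2⟩ := Quotient.exact (hf.symm.trans hf')
  have hx : (A.π g0).obj σ = x := congrArg (fun m => m.1) hg0
  have hp : (A.π g1).obj τ = p := congrArg (fun m => m.1) hg1
  have hr : (A.π g1).obj τ = r := congrArg (fun m => m.2.1) hg1
  have hq : (A.π h2).obj x = q := congrArg (fun m => m.1) hh2
  have hpr : p = r := hp.symm.trans hr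
  subst hpr
  have hqp : q = p := hskel q p ⟨b', a', hX q (b' ≫ a'), hX p (a' ≫ b')⟩
  exact Quotient.sound (A.objSetoid.trans ⟨g0, hx⟩
    (A.objSetoid.trans ⟨h2, hq.trans hqp⟩ (A.objSetoid.symm ⟨g1, hp⟩)))
end
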